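/- Let f and g be φ_{h,m}-convex functions on [0,b] (with the same h, m and φ), with m ∈ (0,1], and let x, y ∈ [0,b] be such that φ(x) < mφ(y). Assume that the functions t ↦ h(t)² and t ↦ h(t)h(1−t) are Lebesgue integrable on (0,1) and that the product f·g is Lebesgue integrable on [φ(x), mφ(y)]. Then (1/(mφ(y) − φ(x))) ∫_{φ(x)}^{mφ(y)} f(u)g(u) du ≤ M·∫₀¹ h(t)² dt + m·N·∫₀¹ h(t)h(1−t) dt, where M = f(φ(x))g(φ(x)) + m²·f(φ(y))g(φ(y)) and N = f(φ(x))g(φ(y)) + f(φ(y))g(φ(x)). -/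

import Mathlib

open MeasureTheory Set intervalIntegral

/-!
The substitution `u = t φ(x) + m (1 - t) φ(y)` turns the mean of `f g` over `[φ(x), m φ(y)]` into
`∫₀¹ f(u(t)) g(u(t)) dt`. Multiplying the two `φ_{h,m}`-convexity inequalities at `u(t)` (all
factors are nonnegative, since `u(t)` stays in `[0, b]`) bounds the integrand by a quadratic form
in `h t` and `m h (1 - t)`, which integrates to the right-hand side because
`∫₀¹ h(1 - t)² dt = ∫₀¹ h(t)² dt`.
-/

/-- A nonnegative function `f` on `[0,b]` is `φ_{h,m}`-convex if
`f (t·φ(x) + m·(1−t)·φ(y)) ≤ h(t)·f(φ(x)) + m·h(1−t)·f(φ(y))`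
for all `x, y ∈ [0,b]` and `t ∈ (0,1)`. -/
def PhiHMConvex (b m : ℝ) (h φ f : ℝ → ℝ) : Prop :=
  (∀ x ∈ Set.Icc (0 : ℝ) b, 0 ≤ f x) ∧
  ∀ x ∈ Set.Icc (0 : ℝ) b, ∀ y ∈ Set.Icc (0 : ℝ) b, ∀ t ∈ Set.Ioo (0 : ℝ) 1,
    f (t * φ x + m * (1 - t) * φ y) ≤ h t * f (φ x) + m * h (1 - t) * f (φ y)

section AffineSubstitution

variable {E : Type*} [NormedAddCommGroup E] {F : ℝ → E} {a c : ℝ}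

theorem intervalIntegral.integral_comp_segment [NormedSpace ℝ E] (F : ℝ → E) (hac : a ≠ c) :
    ∫ t in (0 : ℝ)..1, F (t * a + (1 - t) * c) = (c - a)⁻¹ • ∫ u in a..c, F u := by
  have hca : a - c ≠ 0 := sub_ne_zero.mpr hac
  have hline : ∀ t : ℝ, t * a + (1 - t) * c = (a - c) * t + c := fun t => by ring
  simp only [hline, integral_comp_mul_add F hca, mul_zero, zero_add, mul_one, sub_add_cancel]
  rw [integral_symm, smul_neg, ← neg_smul, ← inv_neg, neg_sub]

theorem IntervalIntegrable.comp_segment (hF : IntervalIntegrable F volume a c) :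
    IntervalIntegrable (fun t => F (t * a + (1 - t) * c)) volume 0 1 := by
  rcases eq_or_ne a c with rfl | hac
  · simp only [← add_mul, add_sub_cancel, one_mul]
    exact intervalIntegrable_const
  have hca : a - c ≠ 0 := sub_ne_zero.mpr hac
  have := (hF.symm.comp_add_right c).comp_mul_left (c := a - c)
  simp only [sub_self, zero_div, div_self hca] at this
  have hline : ∀ t : ℝ, t * a + (1 - t) * c = (a - c) * t + c := fun t => by ring
  simpa only [hline] using this

theorem IntervalIntegrable.comp_one_sub (hF : IntervalIntegrable F volume 0 1) :
    IntervalIntegrable (fun t => F (1 - t)) volume 0 1 := by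
  simpa using (hF.comp_sub_left 1).symm

theorem intervalIntegral.integral_comp_one_sub [NormedSpace ℝ E] (F : ℝ → E) :
    ∫ t in (0 : ℝ)..1, F (1 - t) = ∫ t in (0 : ℝ)..1, F t := by
  simp

end AffineSubstitution

namespace PhiHMConvex

variable {b m : ℝ} {h φ f g : ℝ → ℝ} {x y t : ℝ}

theorem apply_mul_apply_le (hf : PhiHMConvex b m h φ f) (hg : PhiHMConvex b m h φ g)
    (hm : m ∈ Ioc 0 1) (hh : ∀ t ∈ Ioo (0 : ℝ) 1, 0 ≤ h t) (hφ : MapsTo φ (Icc 0 b) (Icc 0 b))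
    (hx : x ∈ Icc 0 b) (hy : y ∈ Icc 0 b) (ht : t ∈ Ioo 0 1) :
    f (t * φ x + m * (1 - t) * φ y) * g (t * φ x + m * (1 - t) * φ y) ≤
      (h t * f (φ x) + m * h (1 - t) * f (φ y)) * (h t * g (φ x) + m * h (1 - t) * g (φ y)) := by
  have ht' : 1 - t ∈ Ioo (0 : ℝ) 1 := ⟨sub_pos.mpr ht.2, sub_lt_self 1 ht.1⟩
  have hmy : m * φ y ∈ Icc 0 b :=
    ⟨mul_nonneg hm.1.le (hφ hy).1, (mul_le_of_le_one_left (hφ hy).1 hm.2).trans (hφ hy).2⟩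
  have hmem : t * φ x + m * (1 - t) * φ y ∈ Icc 0 b := by
    convert convex_Icc (0 : ℝ) b (hφ hx) hmy ht.1.le ht'.1.le (add_sub_cancel t 1) using 1
    simp only [smul_eq_mul]
    ring
  have hbound_nonneg : 0 ≤ h t * f (φ x) + m * h (1 - t) * f (φ y) :=
    add_nonneg (mul_nonneg (hh t ht) (hf.1 _ (hφ hx)))
      (mul_nonneg (mul_nonneg hm.1.le (hh _ ht')) (hf.1 _ (hφ hy)))
  exact mul_le_mul (hf.2 x hx y hy t ht) (hg.2 x hx y hy t ht) (hg.1 _ hmem) hbound_nonneg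

end PhiHMConvex

section ProductBound

variable {h : ℝ → ℝ} (m A B C D : ℝ)

theorem product_bound_eq :
    (fun t => (h t * A + m * h (1 - t) * C) * (h t * B + m * h (1 - t) * D)) =
      fun t => A * B * h t ^ 2 + m ^ 2 * C * D * h (1 - t) ^ 2 +
        m * (A * D + C * B) * (h t * h (1 - t)) := by
  ext t; ring

theorem intervalIntegrable_product_bound (hsq : IntervalIntegrable (fun t => h t ^ 2) volume 0 1)
    (hmix : IntervalIntegrable (fun t => h t * h (1 - t)) volume 0 1) :
    IntervalIntegrable
      (fun t => (h t * A + m * h (1 - t) * C) * (h t * B + m * h (1 - t) * D)) volume 0 1 := by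
  rw [product_bound_eq]
  exact ((hsq.const_mul _).add (hsq.comp_one_sub.const_mul _)).add (hmix.const_mul _)

theorem integral_product_bound (hsq : IntervalIntegrable (fun t => h t ^ 2) volume 0 1)
    (hmix : IntervalIntegrable (fun t => h t * h (1 - t)) volume 0 1) :
    ∫ t in (0 : ℝ)..1, (h t * A + m * h (1 - t) * C) * (h t * B + m * h (1 - t) * D) =
      (A * B + m ^ 2 * C * D) * (∫ t in (0 : ℝ)..1, h t ^ 2) +
        m * (A * D + C * B) * ∫ t in (0 : ℝ)..1, h t * h (1 - t) := by
  simp only [product_bound_eq, intervalIntegral.integral_const_mul,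
    integral_add ((hsq.const_mul _).add (hsq.comp_one_sub.const_mul _)) (hmix.const_mul _),
    integral_add (hsq.const_mul _) (hsq.comp_one_sub.const_mul _),
    integral_comp_one_sub fun t => h t ^ 2]
  ring

end ProductBound

theorem phiHMConvex_mul_integral_ineq_general (b m : ℝ) (h φ f g : ℝ → ℝ)
    (hm : m ∈ Set.Ioc (0 : ℝ) 1)
    (hh : ∀ t ∈ Set.Ioo (0 : ℝ) 1, 0 ≤ h t)
    (hφ : ∀ x ∈ Set.Icc (0 : ℝ) b, φ x ∈ Set.Icc (0 : ℝ) b)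
    (hf : PhiHMConvex b m h φ f) (hg : PhiHMConvex b m h φ g)
    (x : ℝ) (hx : x ∈ Set.Icc (0 : ℝ) b) (y : ℝ) (hy : y ∈ Set.Icc (0 : ℝ) b)
    (hxy : φ x < m * φ y)
    (hint₂ : IntervalIntegrable (fun t => h t ^ 2) volume 0 1)
    (hint₁ : IntervalIntegrable (fun t => h t * h (1 - t)) volume 0 1)
    (hintfg : IntervalIntegrable (fun u => f u * g u) volume (φ x) (m * φ y)) :
    (1 / (m * φ y - φ x)) * ∫ u in (φ x)..(m * φ y), f u * g u ≤
      (f (φ x) * g (φ x) + m ^ 2 * f (φ y) * g (φ y)) * (∫ t in (0 : ℝ)..1, h t ^ 2) +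
        m * (f (φ x) * g (φ y) + f (φ y) * g (φ x)) * ∫ t in (0 : ℝ)..1, h t * h (1 - t) := by
  have hpoint : ∀ t : ℝ, t * φ x + (1 - t) * (m * φ y) = t * φ x + m * (1 - t) * φ y :=
    fun t => by ring
  have hsubst := integral_comp_segment (fun u => f u * g u) hxy.ne
  have hsubst_int := hintfg.comp_segment
  simp only [hpoint, smul_eq_mul] at hsubst hsubst_int
  rw [one_div, ← hsubst, ← integral_product_bound m _ _ _ _ hint₂ hint₁]
  exact integral_mono_on_of_le_Ioo zero_le_one hsubst_int
    (intervalIntegrable_product_bound m _ _ _ _ hint₂ hint₁)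
    fun t ht => hf.apply_mul_apply_le hg hm hh hφ hx hy ht

theorem phiHMConvex_mul_integral_ineq (b m : ℝ) (h φ f g : ℝ → ℝ)
    (hb : 0 < b) (hm : m ∈ Set.Ioc (0 : ℝ) 1)
    (hh : ∀ t ∈ Set.Ioo (0 : ℝ) 1, 0 ≤ h t) (hh0 : h ≠ 0)
    (hφ : ∀ x ∈ Set.Icc (0 : ℝ) b, φ x ∈ Set.Icc (0 : ℝ) b)
    (hf : PhiHMConvex b m h φ f) (hg : PhiHMConvex b m h φ g)
    (x : ℝ) (hx : x ∈ Set.Icc (0 : ℝ) b) (y : ℝ) (hy : y ∈ Set.Icc (0 : ℝ) b)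
    (hxy : φ x < m * φ y)
    (hint₂ : IntervalIntegrable (fun t => h t ^ 2) volume 0 1)
    (hint₁ : IntervalIntegrable (fun t => h t * h (1 - t)) volume 0 1)
    (hintfg : IntervalIntegrable (fun u => f u * g u) volume (φ x) (m * φ y)) :
    (1 / (m * φ y - φ x)) * ∫ u in (φ x)..(m * φ y), f u * g u ≤
      (f (φ x) * g (φ x) + m ^ 2 * f (φ y) * g (φ y)) * (∫ t in (0 : ℝ)..1, h t ^ 2) +
        m * (f (φ x) * g (φ y) + f (φ y) * g (φ x)) * ∫ t in (0 : ℝ)..1, h t * h (1 - t) :=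
  phiHMConvex_mul_integral_ineq_general b m h φ f g hm hh hφ hf hg x hx y hy hxy hint₂ hint₁ hintfg
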